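/- (Welch bound / frame potential lower bound) For unit vectors u₁,…,u_M in ℝ^d with M ≥ d, the frame potential ∑_{i=1}^M ∑_{j=1}^M (⟨u_i, u_j⟩)² is at least M²/d. -/

import Mathlib

/-!
Write the vectors in an orthonormal basis as the rows of a matrix `U`. The frame potential is the
squared Frobenius norm of the Gram matrix `U Uᵀ`, which equals that of the `d × d` frame matrix
`S = Uᵀ U`, while `tr S = ∑ ‖uᵢ‖²`. Cauchy–Schwarz on the diagonal of `S` gives
`(tr S)² ≤ d ∑ₖ Sₖₖ² ≤ d ‖S‖²_F`.
-/

open Finset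
open scoped RealInnerProductSpace Matrix

namespace Matrix

variable {m n R : Type*} [Fintype m] [Fintype n]

theorem trace_mul_transpose_self [CommSemiring R] (A : Matrix m n R) :
    trace (A * Aᵀ) = ∑ i, ∑ j, A i j ^ 2 := by
  simp [trace, mul_apply, sq]

theorem sum_sq_mul_transpose_self_eq [CommSemiring R] (U : Matrix m n R) :
    ∑ i, ∑ j, (U * Uᵀ) i j ^ 2 = ∑ k, ∑ l, (Uᵀ * U) k l ^ 2 := by
  rw [← trace_mul_transpose_self, ← trace_mul_transpose_self]
  simp only [transpose_mul, transpose_transpose, Matrix.mul_assoc]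
  rw [trace_mul_comm]
  simp only [Matrix.mul_assoc]

theorem sq_trace_le_card_mul_sum_sq [CommRing R] [LinearOrder R] [IsStrictOrderedRing R]
    (A : Matrix n n R) : trace A ^ 2 ≤ Fintype.card n * ∑ k, ∑ l, A k l ^ 2 := by
  calc trace A ^ 2 ≤ Fintype.card n * ∑ k, A k k ^ 2 := sq_sum_le_card_mul_sum_sq
    _ ≤ Fintype.card n * ∑ k, ∑ l, A k l ^ 2 := by
      gcongr with k
      exact single_le_sum (f := fun l => A k l ^ 2) (fun _ _ => sq_nonneg _) (mem_univ k)

theorem sq_trace_transpose_mul_self_le [CommRing R] [LinearOrder R] [IsStrictOrderedRing R]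
    (U : Matrix m n R) :
    trace (Uᵀ * U) ^ 2 ≤ Fintype.card n * ∑ i, ∑ j, (U * Uᵀ) i j ^ 2 := by
  rw [sum_sq_mul_transpose_self_eq]
  exact sq_trace_le_card_mul_sum_sq _

end Matrix

theorem sq_sum_norm_sq_le_finrank_mul_frame_potential {ι E : Type*} [Fintype ι]
    [NormedAddCommGroup E] [InnerProductSpace ℝ E] [FiniteDimensional ℝ E] (u : ι → E) :
    (∑ i, ‖u i‖ ^ 2) ^ 2 ≤ Module.finrank ℝ E * ∑ i, ∑ j, ⟪u i, u j⟫ ^ 2 := by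
  let b := stdOrthonormalBasis ℝ E
  let U : Matrix ι (Fin (Module.finrank ℝ E)) ℝ := Matrix.of fun i k => ⟪u i, b k⟫
  have gram : ∀ i j, (U * Uᵀ) i j = ⟪u i, u j⟫ := fun i j => by
    simpa [U, Matrix.mul_apply, real_inner_comm (u j)] using b.sum_inner_mul_inner (u i) (u j)
  have trace_eq : Matrix.trace (Uᵀ * U) = ∑ i, ‖u i‖ ^ 2 := by
    rw [Matrix.trace_mul_comm]
    simp only [Matrix.trace, Matrix.diag, gram, real_inner_self_eq_norm_sq]
  simpa [trace_eq, gram] using U.sq_trace_transpose_mul_self_le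

theorem welch_bound_general {d M : ℕ}
    (u : Fin M → EuclideanSpace ℝ (Fin d)) (hu : ∀ i, ‖u i‖ = 1) :
    (M : ℝ) ^ 2 / d ≤ ∑ i, ∑ j, (⟪u i, u j⟫ : ℝ) ^ 2 := by
  have h := sq_sum_norm_sq_le_finrank_mul_frame_potential u
  simp only [hu, one_pow, sum_const, card_univ, Fintype.card_fin, nsmul_eq_mul, mul_one,
    finrank_euclideanSpace_fin] at h
  exact div_le_of_le_mul₀ d.cast_nonneg (by positivity) (by rwa [mul_comm])

/-- Welch bound: for M ≥ d unit vectors in ℝ^d, the frame potential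
∑_i ∑_j ⟨u_i, u_j⟩² is at least M²/d. -/
theorem welch_bound {d M : ℕ} (hd : 0 < d) (hMd : d ≤ M)
    (u : Fin M → EuclideanSpace ℝ (Fin d)) (hu : ∀ i, ‖u i‖ = 1) :
    (M : ℝ) ^ 2 / d ≤ ∑ i, ∑ j, (⟪u i, u j⟫ : ℝ) ^ 2 :=
  welch_bound_general u hu
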